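/- For every n ≥ 4 and every vertex π of the Bubble-sort graph BS_n, a 4-element set of permutations is the vertex set of a 4-cycle of BS_n containing π if and only if it equals {π, π·b_i, π·b_j, π·b_i·b_j} for some indices with 1 ≤ i < j−1 ≤ n−2 (i.e. the two adjacent transpositions b_i and b_j are independent: their indices differ by at least 2, so they commute); equivalently, every 4-cycle of BS_n has canonical form (b_j b_i)² with 1 ≤ i < j−1 ≤ n−2. -/

import Mathlib

/-- The adjacent transposition `b_i` (1-indexed, swapping positions `i` and `i+1`,
i.e. the 0-indexed positions `i-1` and `i` of `Fin n`), extended by `1` outside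
the valid range `1 ≤ i ≤ n-1`. -/
def bsGen (n i : ℕ) : Equiv.Perm (Fin n) :=
  if h : 0 < i ∧ i < n then
    Equiv.swap ⟨i - 1, lt_of_le_of_lt (Nat.pred_le i) h.2⟩ ⟨i, h.2⟩
  else 1

theorem bsGen_ne_one (n i : ℕ) (h1 : 0 < i) (h2 : i < n) : bsGen n i ≠ 1 := by
  rw [bsGen, dif_pos ⟨h1, h2⟩]
  intro h
  have h' := congrArg Fin.val (Equiv.swap_eq_one_iff.mp h)
  simp at h'
  omega

theorem bsGen_mul_self (n i : ℕ) : bsGen n i * bsGen n i = 1 := by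
  rw [bsGen]; split
  · exact Equiv.swap_mul_self _ _
  · simp

/-- The Bubble-sort graph `BS_n` on the symmetric group `Sym_n = Equiv.Perm (Fin n)`:
`π` and `τ` are adjacent iff `τ = π * b_i` for some `1 ≤ i ≤ n-1`. -/
def BS (n : ℕ) : SimpleGraph (Equiv.Perm (Fin n)) where
  Adj π τ := ∃ i, 0 < i ∧ i < n ∧ τ = π * bsGen n i
  symm := by
    refine ⟨?_⟩
    rintro π τ ⟨i, h1, h2, rfl⟩
    exact ⟨i, h1, h2, by rw [mul_assoc, bsGen_mul_self, mul_one]⟩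
  loopless := by
    refine ⟨?_⟩
    rintro π ⟨i, h1, h2, h⟩
    exact bsGen_ne_one n i h1 h2 (left_eq_mul.mp h)

/-- `H` is an `ℓ`-cycle subgraph of `BS n`: the subgraph traced by some cycle walk
with `ℓ` vertices (equivalently, of length `ℓ`).  Since a cycle subgraph determines
the traversal up to starting vertex and direction, counting such subgraphs counts
cycles once regardless of starting vertex and direction. -/
def IsCycleSub {n : ℕ} (H : (BS n).Subgraph) (ℓ : ℕ) : Prop :=
  ∃ (u : Equiv.Perm (Fin n)) (w : (BS n).Walk u u),
    w.IsCycle ∧ w.length = ℓ ∧ H = w.toSubgraph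

/-
Along `Fin n ↪ ℕ` the generator `b_i` becomes the transposition `(i-1 i)` of `ℕ`. A 4-cycle
`π, π b_a, π b_a b_b, π b_a b_b b_c` closing up via `b_d` gives the relation `b_a b_b = b_d b_c`
with `a ≠ b ≠ c` (no backtracking). Comparing both sides at the points moved by the
transpositions forces `c = a`, `d = b` and `|a - b| ≥ 2`, so `b_a` and `b_b` commute and the
vertex set is `{π, π b_a, π b_b, π b_a b_b}`. Conversely two commuting generators close such a
square, and rotating a cycle to start at `π` does not change its vertex set.
-/

open Equiv SimpleGraph

lemma swap_pred_apply_cases {i : ℕ} (hi : 0 < i) (k : ℕ) :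
    (k + 1 = i ∧ swap (i - 1) i k = k + 1) ∨ (k = i ∧ swap (i - 1) i k + 1 = k) ∨
      (k + 1 ≠ i ∧ k ≠ i ∧ swap (i - 1) i k = k) := by
  rw [swap_apply_def]; split_ifs <;> omega

lemma eq_and_independent_of_swap_mul_swap_eq {a b c d : ℕ} (ha : 0 < a) (hb : 0 < b)
    (hc : 0 < c) (hd : 0 < d) (hab : a ≠ b) (hbc : b ≠ c)
    (h : swap (a - 1) a * swap (b - 1) b = swap (d - 1) d * swap (c - 1) c) :
    a = c ∧ b = d ∧ (a + 1 < b ∨ b + 1 < a) := by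
  have hk : ∀ k, swap (a - 1) a (swap (b - 1) b k) = swap (d - 1) d (swap (c - 1) c k) :=
    fun k => congrArg (· k) h
  have hpt : ∀ k, _ := fun k =>
    And.intro (swap_pred_apply_cases ha (swap (b - 1) b k)) <|
    And.intro (swap_pred_apply_cases hb k) <|
    And.intro (swap_pred_apply_cases hd (swap (c - 1) c k)) <|
    And.intro (swap_pred_apply_cases hc k) (hk k)
  rcases (show b = a + 1 ∨ a = b + 1 ∨ a + 1 < b ∨ b + 1 < a by omega)
    with hab' | hab' | hab' | hab'
  · have := hpt a; have := hpt (a + 1); omega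
  · have := hpt (b - 1); have := hpt b; omega
  all_goals
    rcases (show c = d ∨ d = c + 1 ∨ c = d + 1 ∨ c + 1 < d ∨ d + 1 < c by omega)
      with hcd | hcd | hcd | hcd | hcd
    · have := hpt a; omega
    · have := hpt (c - 1); omega
    · have := hpt (d + 1); omega
    all_goals have := hpt c; have := hpt d; omega

lemma extendDomain_bsGen {n i : ℕ} (hi : i < n) :
    (bsGen n i).extendDomain Fin.equivSubtype = swap (i - 1) i := by
  ext k
  by_cases hk : k < n
  · rw [Perm.extendDomain_apply_subtype (b := k) (h := hk)]
    simp only [Fin.equivSubtype_symm_apply, Fin.equivSubtype_apply, bsGen]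
    split_ifs with h
    · rw [swap_apply_def, swap_apply_def]
      split_ifs <;> simp only [Fin.ext_iff] at * <;> omega
    · obtain rfl : i = 0 := by omega
      simp
  · rw [Perm.extendDomain_apply_not_subtype (b := k) (h := hk), swap_apply_of_ne_of_ne] <;> omega

lemma bsGen_injOn (n : ℕ) : Set.InjOn (bsGen n) (Set.Ioo 0 n) := by
  rintro i ⟨hi, hi'⟩ j ⟨hj, hj'⟩ h
  have := congrArg (fun σ => σ.extendDomain Fin.equivSubtype i) h
  simp only [extendDomain_bsGen hi', extendDomain_bsGen hj', swap_apply_right] at this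
  rcases swap_pred_apply_cases hj i with h' | h' | h' <;> omega

lemma bsGen_commute {n i j : ℕ} (hi : 0 < i) (hij : i + 1 < j) (hj : j < n) :
    Commute (bsGen n i) (bsGen n j) := by
  rw [bsGen, bsGen, dif_pos ⟨hi, by omega⟩, dif_pos ⟨by omega, hj⟩]
  exact (Perm.disjoint_swap_swap (by simp [Fin.ext_iff]; omega)).commute

lemma bsGen_inv (n i : ℕ) : (bsGen n i)⁻¹ = bsGen n i :=
  inv_eq_of_mul_eq_one_right (bsGen_mul_self n i)

lemma eq_and_independent_of_bsGen_mul_eq {n a b c d : ℕ} (ha : 0 < a) (ha' : a < n)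
    (hb : 0 < b) (hb' : b < n) (hc : 0 < c) (hc' : c < n) (hd : 0 < d) (hd' : d < n)
    (hab : a ≠ b) (hbc : b ≠ c) (h : bsGen n a * bsGen n b = bsGen n d * bsGen n c) :
    a = c ∧ b = d ∧ (a + 1 < b ∨ b + 1 < a) := by
  refine eq_and_independent_of_swap_mul_swap_eq ha hb hc hd hab hbc ?_
  simpa only [map_mul, Perm.extendDomainHom_apply, extendDomain_bsGen ha', extendDomain_bsGen hb',
    extendDomain_bsGen hc', extendDomain_bsGen hd'] using
    congrArg (Perm.extendDomainHom Fin.equivSubtype) h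

lemma mul_bsGen_mul_bsGen_self {n : ℕ} (x : Perm (Fin n)) (i : ℕ) :
    x * bsGen n i * bsGen n i = x := by
  rw [mul_assoc, bsGen_mul_self, mul_one]

lemma exists_independent_of_isCycle {n : ℕ} {π : Perm (Fin n)} {w : (BS n).Walk π π}
    (hw : w.IsCycle) (hl : w.length = 4) :
    ∃ i j, 1 ≤ i ∧ i + 1 < j ∧ j < n ∧
      {x | x ∈ w.support} = {π, π * bsGen n i, π * bsGen n j, π * bsGen n i * bsGen n j} := by
  have hnodup := hw.support_nodup
  rcases w with _ | ⟨e₁, _ | ⟨e₂, _ | ⟨e₃, _ | ⟨e₄, _ | ⟨_, _⟩⟩⟩⟩⟩ <;>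
    simp only [Walk.length_cons, Walk.length_nil] at hl <;> try omega
  simp only [Walk.support_cons, Walk.support_nil, List.tail_cons, List.nodup_cons,
    List.mem_cons, List.not_mem_nil, or_false, not_or] at hnodup ⊢
  obtain ⟨⟨-, hπ₁, -⟩, ⟨-, hπ₂⟩, -⟩ := hnodup
  obtain ⟨a, ha, ha', rfl⟩ := e₁
  obtain ⟨b, hb, hb', rfl⟩ := e₂
  obtain ⟨c, hc, hc', rfl⟩ := e₃
  obtain ⟨d, hd, hd', hπ⟩ := e₄
  have hab : a ≠ b := by
    rintro rfl
    exact hπ₂ (mul_bsGen_mul_bsGen_self π a)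
  have hbc : b ≠ c := by
    rintro rfl
    exact hπ₁ (mul_bsGen_mul_bsGen_self _ b).symm
  have hrel : bsGen n a * bsGen n b = bsGen n d * bsGen n c := by
    rw [← bsGen_inv n c, ← bsGen_inv n d, ← mul_inv_rev, eq_inv_iff_mul_eq_one]
    simpa only [mul_assoc, left_eq_mul] using hπ
  obtain ⟨rfl, rfl, hind⟩ :=
    eq_and_independent_of_bsGen_mul_eq ha ha' hb hb' hc hc' hd hd' hab hbc hrel
  have hcomm : Commute (bsGen n a) (bsGen n b) := by
    rcases hind with h | h
    exacts [bsGen_commute ha h hb', (bsGen_commute hb h ha').symm]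
  have hπaba : π * bsGen n a * bsGen n b * bsGen n a = π * bsGen n b := by
    rw [mul_assoc π, hcomm.eq, ← mul_assoc, mul_bsGen_mul_bsGen_self]
  rw [hπaba]
  rcases hind with h | h
  · refine ⟨a, b, ha, h, hb', ?_⟩
    ext; simp only [Set.mem_ofPred_eq, Set.mem_insert_iff, Set.mem_singleton_iff]; tauto
  · refine ⟨b, a, hb, h, ha', ?_⟩
    rw [mul_assoc π (bsGen n b), ← hcomm.eq, ← mul_assoc]
    ext; simp only [Set.mem_ofPred_eq, Set.mem_insert_iff, Set.mem_singleton_iff]; tauto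

lemma exists_isCycle_of_independent {n i j : ℕ} (π : Perm (Fin n)) (hi : 1 ≤ i)
    (hij : i + 1 < j) (hj : j < n) :
    ∃ w : (BS n).Walk π π, w.IsCycle ∧ w.length = 4 ∧
      {x | x ∈ w.support} = {π, π * bsGen n i, π * bsGen n j, π * bsGen n i * bsGen n j} := by
  have hcomm := bsGen_commute hi hij hj
  have e₁ : (BS n).Adj π (π * bsGen n i) := ⟨i, hi, by omega, rfl⟩
  have e₂ : (BS n).Adj (π * bsGen n i) (π * bsGen n i * bsGen n j) := ⟨j, by omega, hj, rfl⟩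
  have e₃ : (BS n).Adj (π * bsGen n i * bsGen n j) (π * bsGen n j) := ⟨i, hi, by omega, by
    rw [mul_assoc π, hcomm.eq, ← mul_assoc, mul_bsGen_mul_bsGen_self]⟩
  have e₄ : (BS n).Adj (π * bsGen n j) π := ⟨j, by omega, hj, (mul_bsGen_mul_bsGen_self π j).symm⟩
  have hi₁ := bsGen_ne_one n i hi (by omega)
  have hj₁ := bsGen_ne_one n j (by omega) hj
  have hij₁ : bsGen n i ≠ bsGen n j := fun h => by
    have := bsGen_injOn n ⟨hi, by omega⟩ ⟨by omega, hj⟩ h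
    omega
  have hij₂ : bsGen n i * bsGen n j ≠ 1 := by
    rwa [Ne, mul_eq_one_iff_eq_inv, bsGen_inv]
  refine ⟨.cons e₁ (.cons e₂ (.cons e₃ (.cons e₄ .nil))), ?_, rfl, ?_⟩
  · rw [Walk.isCycle_iff_isPath_tail_and_le_length, Walk.isPath_def]
    simp [mul_assoc, hi₁, hj₁, hij₁, hij₂]
  · ext; simp only [Walk.support_cons, Walk.support_nil, List.mem_cons, List.not_mem_nil,
      Set.mem_ofPred_eq, Set.mem_insert_iff, Set.mem_singleton_iff]; tauto

theorem bs_four_cycles_characterization_general (n : ℕ) (π : Equiv.Perm (Fin n))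
    (S : Set (Equiv.Perm (Fin n))) :
    (∃ (u : Equiv.Perm (Fin n)) (w : (BS n).Walk u u),
        w.IsCycle ∧ w.length = 4 ∧ π ∈ w.support ∧ S = {x | x ∈ w.support}) ↔
      ∃ i j : ℕ, 1 ≤ i ∧ i + 1 < j ∧ j < n ∧
        S = {π, π * bsGen n i, π * bsGen n j, π * bsGen n i * bsGen n j} := by
  constructor
  · rintro ⟨u, w, hw, hl, hπ, rfl⟩
    obtain ⟨i, j, hi, hij, hj, hS⟩ :=
      exists_independent_of_isCycle (hw.rotate hπ) (by rw [Walk.length_rotate, hl])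
    refine ⟨i, j, hi, hij, hj, ?_⟩
    simpa only [Walk.mem_support_rotate_iff] using hS
  · rintro ⟨i, j, hi, hij, hj, rfl⟩
    obtain ⟨w, hw, hl, hS⟩ := exists_isCycle_of_independent π hi hij hj
    exact ⟨π, w, hw, hl, w.start_mem_support, hS.symm⟩

/-- for `n ≥ 4` and any vertex `π` of `BS_n`, a set of permutations is the
vertex set of a 4-cycle through `π` iff it is `{π, π·b_i, π·b_j, π·b_i·b_j}` for some
independent pair `1 ≤ i < j-1 ≤ n-2` (i.e. `i + 1 < j < n`); equivalently every 4-cycle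
has canonical form `(b_j b_i)²` with independent `b_i, b_j`. -/
theorem bs_four_cycles_characterization (n : ℕ) (hn : 4 ≤ n) (π : Equiv.Perm (Fin n))
    (S : Set (Equiv.Perm (Fin n))) :
    (∃ (u : Equiv.Perm (Fin n)) (w : (BS n).Walk u u),
        w.IsCycle ∧ w.length = 4 ∧ π ∈ w.support ∧ S = {x | x ∈ w.support}) ↔
      ∃ i j : ℕ, 1 ≤ i ∧ i + 1 < j ∧ j < n ∧
        S = {π, π * bsGen n i, π * bsGen n j, π * bsGen n i * bsGen n j} :=
  bs_four_cycles_characterization_general n π S
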